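/- arXiv:1905.08862 — 2 statements merged into one kernel-verified Lean document; each statement's English description precedes it below -/
import Mathlib

section
/- Let n ≥ 2 and let K and L be convex bodies in ℝⁿ with K ∩ L ≠ ∅. If h_{K∩L}(u) = min{h_K(u), h_L(u)} for every u ∈ S^{n−1}, then K ∪ L is convex. -/
/-!
Suppose `z = a • x + b • y ∉ K ∪ L` with `x ∈ K`, `y ∈ L`. Since support functions are positively
homogeneous, the hypothesis holds for every vector `w`, so the set of directions separating `z`
from `K ∩ L`, `{w | h_{K∩L}(w) < ⟪z, w⟫}`, is the union of the open sets `U` and `V` of directions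
separating `z` from `K` and from `L`. That set is convex (`h_{K∩L}` is convex), hence connected, and
`U`, `V` are nonempty by Hahn–Banach, so some `w` separates `z` from both `K` and `L`. This is
impossible, as `⟪z, w⟫` is a convex combination of `⟪x, w⟫ ≤ h_K(w)` and `⟪y, w⟫ ≤ h_L(w)`.
-/

/-- The support function `h_K(u) = sup_{x ∈ K} ⟪x, u⟫` of a set `K ⊆ ℝⁿ`. -/
noncomputable def suppFn {n : ℕ} (K : Set (EuclideanSpace ℝ (Fin n)))
    (u : EuclideanSpace ℝ (Fin n)) : ℝ :=
  sSup ((fun x => (inner ℝ x u : ℝ)) '' K)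

open Set Pointwise

variable {n : ℕ}

local notation "E" => EuclideanSpace ℝ (Fin n)

lemma continuous_inner_left (u : E) : Continuous fun x : E => (inner ℝ x u : ℝ) :=
  continuous_id.inner continuous_const

lemma inner_le_suppFn {K : Set E} (hK : IsCompact K) {x : E} (hx : x ∈ K) (u : E) :
    (inner ℝ x u : ℝ) ≤ suppFn K u :=
  le_csSup (hK.image (continuous_inner_left u)).bddAbove (mem_image_of_mem _ hx)

lemma exists_suppFn_eq_inner {K : Set E} (hK : IsCompact K) (hne : K.Nonempty) (u : E) :
    ∃ x ∈ K, suppFn K u = inner ℝ x u := by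
  obtain ⟨x, hx, hmax⟩ := hK.exists_isMaxOn hne (continuous_inner_left u).continuousOn
  exact ⟨x, hx, IsGreatest.csSup_eq ⟨mem_image_of_mem _ hx, by
    rintro _ ⟨y, hy, rfl⟩; exact hmax hy⟩⟩

lemma suppFn_smul_of_nonneg (K : Set E) {c : ℝ} (hc : 0 ≤ c) (u : E) :
    suppFn K (c • u) = c * suppFn K u := by
  have himage : (fun x : E => (inner ℝ x (c • u) : ℝ)) '' K =
      c • ((fun x : E => (inner ℝ x u : ℝ)) '' K) := by
    rw [← image_smul, image_image]
    simp only [real_inner_smul_right, smul_eq_mul]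
  rw [suppFn, himage, Real.sSup_smul_of_nonneg hc, smul_eq_mul, suppFn]

lemma suppFn_zero (K : Set E) : suppFn K 0 = 0 := by
  simpa using suppFn_smul_of_nonneg K le_rfl (0 : E)

lemma convexOn_suppFn {K : Set E} (hK : IsCompact K) (hne : K.Nonempty) :
    ConvexOn ℝ univ (suppFn K) := by
  refine ⟨convex_univ, fun u _ v _ a b ha hb _ => ?_⟩
  obtain ⟨x, hx, hxe⟩ := exists_suppFn_eq_inner hK hne (a • u + b • v)
  rw [hxe, inner_add_right, real_inner_smul_right, real_inner_smul_right, smul_eq_mul,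
    smul_eq_mul]
  gcongr <;> exact inner_le_suppFn hK hx _

lemma lipschitzWith_suppFn {K : Set E} {r : NNReal} (hK : IsCompact K) (hne : K.Nonempty)
    (hr : K ⊆ Metric.closedBall 0 r) : LipschitzWith r (suppFn K) := by
  refine LipschitzWith.of_le_add_mul r fun u v => ?_
  obtain ⟨x, hx, hxe⟩ := exists_suppFn_eq_inner hK hne u
  have hxr : ‖x‖ ≤ r := by simpa using hr hx
  calc suppFn K u = inner ℝ x v + inner ℝ x (u - v) := by rw [hxe, inner_sub_right]; ring
    _ ≤ suppFn K v + r * dist u v := by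
      gcongr
      · exact inner_le_suppFn hK hx v
      · rw [dist_eq_norm]
        exact (real_inner_le_norm x _).trans (by gcongr)

lemma continuous_suppFn {K : Set E} (hK : IsCompact K) (hne : K.Nonempty) :
    Continuous (suppFn K) := by
  obtain ⟨r, hr⟩ := hK.isBounded.subset_closedBall 0
  exact (lipschitzWith_suppFn hK hne
    (hr.trans (Metric.closedBall_subset_closedBall (le_max_left r 0)))
    (r := ⟨max r 0, le_max_right r 0⟩)).continuous

lemma exists_suppFn_lt_inner {K : Set E} (hK : IsCompact K) (hKcv : Convex ℝ K)
    (hne : K.Nonempty) {z : E} (hz : z ∉ K) : ∃ u : E, suppFn K u < inner ℝ z u := by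
  obtain ⟨f, c, hfK, hcz⟩ := geometric_hahn_banach_closed_point hKcv hK.isClosed hz
  set u := (InnerProductSpace.toDual ℝ E).symm f
  have hf : ∀ x, f x = inner ℝ x u := fun x => by
    rw [real_inner_comm, InnerProductSpace.toDual_symm_apply]
  obtain ⟨x, hx, hxe⟩ := exists_suppFn_eq_inner hK hne u
  exact ⟨u, by rw [hxe, ← hf, ← hf]; exact (hfK x hx).trans hcz⟩

lemma suppFn_eq_min_of_forall_sphere {K L M : Set E}
    (h : ∀ u ∈ Metric.sphere (0 : E) 1, suppFn M u = min (suppFn K u) (suppFn L u)) (w : E) :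
    suppFn M w = min (suppFn K w) (suppFn L w) := by
  rcases eq_or_ne w 0 with rfl | hw
  · simp [suppFn_zero]
  have hu : ‖w‖⁻¹ • w ∈ Metric.sphere (0 : E) 1 := by
    simp [norm_smul, norm_ne_zero_iff.mpr hw]
  have hw' : w = ‖w‖ • ‖w‖⁻¹ • w := by
    rw [smul_inv_smul₀ (norm_ne_zero_iff.mpr hw)]
  rw [hw', suppFn_smul_of_nonneg _ (norm_nonneg w), suppFn_smul_of_nonneg _ (norm_nonneg w),
    suppFn_smul_of_nonneg _ (norm_nonneg w), h _ hu, mul_min_of_nonneg _ _ (norm_nonneg w)]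

lemma convex_setOf_suppFn_lt_inner {K : Set E} (hK : IsCompact K) (hne : K.Nonempty) (z : E) :
    Convex ℝ {w : E | suppFn K w < inner ℝ z w} := by
  have hlin : ConcaveOn ℝ univ fun w : E => (inner ℝ z w : ℝ) :=
    (innerₛₗ ℝ z).concaveOn convex_univ
  simpa [sub_neg] using ((convexOn_suppFn hK hne).sub hlin).convex_lt 0

lemma add_smul_mem_union_of_suppFn_inter_eq_min {K L : Set E}
    (hKcp : IsCompact K) (hKcv : Convex ℝ K) (hLcp : IsCompact L) (hLcv : Convex ℝ L)
    (hKL : (K ∩ L).Nonempty)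
    (hmin : ∀ w, suppFn (K ∩ L) w = min (suppFn K w) (suppFn L w))
    {x y : E} (hx : x ∈ K) (hy : y ∈ L) {a b : ℝ} (ha : 0 ≤ a) (hb : 0 ≤ b) (hab : a + b = 1) :
    a • x + b • y ∈ K ∪ L := by
  by_contra hz
  obtain ⟨hzK, hzL⟩ := not_or.mp hz
  set z := a • x + b • y
  obtain ⟨u, hu⟩ := exists_suppFn_lt_inner hKcp hKcv ⟨x, hx⟩ hzK
  obtain ⟨v, hv⟩ := exists_suppFn_lt_inner hLcp hLcv ⟨y, hy⟩ hzL
  have hsep : {w : E | suppFn (K ∩ L) w < inner ℝ z w} =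
      {w | suppFn K w < inner ℝ z w} ∪ {w | suppFn L w < inner ℝ z w} := by
    ext w; simp [hmin]
  obtain ⟨w, -, hwK, hwL⟩ :=
    (convex_setOf_suppFn_lt_inner (hKcp.inter_right hLcp.isClosed) hKL z).isPreconnected _ _
      (isOpen_lt (continuous_suppFn hKcp ⟨x, hx⟩) (continuous_const.inner continuous_id))
      (isOpen_lt (continuous_suppFn hLcp ⟨y, hy⟩) (continuous_const.inner continuous_id))
      hsep.subset ⟨u, hsep ▸ Or.inl hu, hu⟩ ⟨v, hsep ▸ Or.inr hv, hv⟩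
  have hzw : (inner ℝ z w : ℝ) ≤ max (suppFn K w) (suppFn L w) := by
    set c := max (suppFn K w) (suppFn L w)
    calc (inner ℝ z w : ℝ) = a * inner ℝ x w + b * inner ℝ y w := by
          simp only [z, inner_add_left, real_inner_smul_left]
      _ ≤ a * c + b * c := by
          gcongr
          · exact (inner_le_suppFn hKcp hx w).trans (le_max_left _ _)
          · exact (inner_le_suppFn hLcp hy w).trans (le_max_right _ _)
      _ = c := by rw [← add_mul, hab, one_mul]
  exact (max_lt (α := ℝ) hwK hwL).not_ge hzw

theorem stmt1_general {n : ℕ}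
    (K L : Set (EuclideanSpace ℝ (Fin n)))
    (hKcp : IsCompact K) (hKcv : Convex ℝ K)
    (hLcp : IsCompact L) (hLcv : Convex ℝ L)
    (hKL : (K ∩ L).Nonempty)
    (hmin : ∀ u ∈ Metric.sphere (0 : EuclideanSpace ℝ (Fin n)) 1,
      suppFn (K ∩ L) u = min (suppFn K u) (suppFn L u)) :
    Convex ℝ (K ∪ L) := by
  have hminKL : ∀ w, suppFn (K ∩ L) w = min (suppFn K w) (suppFn L w) :=
    suppFn_eq_min_of_forall_sphere hmin
  have hminLK : ∀ w, suppFn (L ∩ K) w = min (suppFn L w) (suppFn K w) := fun w => by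
    rw [inter_comm, min_comm, hminKL]
  intro x hx y hy a b ha hb hab
  rcases hx with hxK | hxL <;> rcases hy with hyK | hyL
  · exact Or.inl (hKcv hxK hyK ha hb hab)
  · exact add_smul_mem_union_of_suppFn_inter_eq_min hKcp hKcv hLcp hLcv hKL hminKL hxK hyL ha hb hab
  · rw [union_comm]
    exact add_smul_mem_union_of_suppFn_inter_eq_min hLcp hLcv hKcp hKcv (inter_comm K L ▸ hKL)
      hminLK hxL hyK ha hb hab
  · exact Or.inr (hLcv hxL hyL ha hb hab)

/-- If `K, L ⊆ ℝⁿ` (`n ≥ 2`) are convex bodies with `K ∩ L ≠ ∅` and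
`h_{K∩L}(u) = min (h_K(u)) (h_L(u))` for every unit vector `u`, then `K ∪ L` is convex. -/
theorem stmt1 {n : ℕ} (hn : 2 ≤ n)
    (K L : Set (EuclideanSpace ℝ (Fin n)))
    (hKcp : IsCompact K) (hKcv : Convex ℝ K) (hKint : (interior K).Nonempty)
    (hLcp : IsCompact L) (hLcv : Convex ℝ L) (hLint : (interior L).Nonempty)
    (hKL : (K ∩ L).Nonempty)
    (hmin : ∀ u ∈ Metric.sphere (0 : EuclideanSpace ℝ (Fin n)) 1,
      suppFn (K ∩ L) u = min (suppFn K u) (suppFn L u)) :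
    Convex ℝ (K ∪ L) :=
  stmt1_general K L hKcp hKcv hLcp hLcv hKL hmin
end

section
/- Let n ≥ 2 and let K, L ∈ 𝒦₀(ℝⁿ). Then ∫_{S^{n−1}} |ρ_K(u)^{−1} − ρ_L(u)^{−1}| dσ(u) = ∫_{S^{n−1}} |h_{K°}(u) − h_{L°}(u)| dσ(u) ≤ ∫_{S^{n−1}} (h_{K°}(u) + h_{L°}(u) − 2·h_{K°∩L°}(u)) dσ(u), with equality if and only if K° ∪ L° = (K∩L)°. -/
open MeasureTheory

/-- The radial function `ρ_K(u) = max {r : r • u ∈ K}` of a set `K ⊆ ℝⁿ`. -/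
noncomputable def radialFn {n : ℕ} (K : Set (EuclideanSpace ℝ (Fin n)))
    (u : EuclideanSpace ℝ (Fin n)) : ℝ :=
  sSup {r : ℝ | r • u ∈ K}

/-- The polar body `K° = {y : ⟪x, y⟫ ≤ 1 for all x ∈ K}` of a set `K ⊆ ℝⁿ`. -/
def polarBody {n : ℕ} (K : Set (EuclideanSpace ℝ (Fin n))) :
    Set (EuclideanSpace ℝ (Fin n)) :=
  {y | ∀ x ∈ K, (inner ℝ x y : ℝ) ≤ 1}

/-- The uniform (rotation invariant) probability measure `σ` on the unit sphere
`S^{n-1} ⊆ ℝⁿ`. -/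
noncomputable def sphereProb (n : ℕ) :
    Measure (Metric.sphere (0 : EuclideanSpace ℝ (Fin n)) 1) :=
  ((volume : Measure (EuclideanSpace ℝ (Fin n))).toSphere Set.univ)⁻¹ •
    (volume : Measure (EuclideanSpace ℝ (Fin n))).toSphere

/-!
By the bipolar theorem, `x ∈ K ↔ h_{K°}(x) ≤ 1`; hence the ray through `u` leaves `K` at
`1 / h_{K°}(u)`, i.e. `ρ_K⁻¹ = h_{K°}`. Pointwise `|a - b| = a + b - 2 min(a, b)` and
`h_{K° ∩ L°} ≤ min(h_{K°}, h_{L°})`, which gives the inequality; as all integrands are continuous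
and `σ` charges open sets, equality holds iff `min(h_{K°}, h_{L°}) ≤ h_{K° ∩ L°}` on the sphere, hence
everywhere by homogeneity.

For compact convex `A, B` with a common point this holds iff `A ∪ B` is convex. If `A ∪ B` is
convex, the segment joining maximisers of `⟪·, u⟫` on `A` and on `B` is connected, so it meets
`A ∩ B`. Conversely, a convex combination `c ∉ A ∪ B` of points of `A ∪ B` satisfies
`⟪c, ·⟫ ≤ max(h_A, h_B)`; separate `c` from `A` by `u₁` and from `B` by `u₂`. By convexity of
`h_{A ∩ B}`, `h_{A ∩ B} < ⟪c, ·⟫` on the whole segment `[u₁, u₂]`, yet at a point of it where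
`h_A = h_B` we get `⟪c, ·⟫ ≤ h_A = min(h_A, h_B) ≤ h_{A ∩ B}`.

Finally `(K° ∪ L°)° = K°° ∩ L°° = K ∩ L`, so the closed set `K° ∪ L°` is convex iff it equals
`(K ∩ L)°`.
-/

open Metric Set Bornology
open scoped RealInnerProductSpace

section SupportFunction

variable {n : ℕ} {A B : Set (EuclideanSpace ℝ (Fin n))} {u x : EuclideanSpace ℝ (Fin n)} {c : ℝ}

lemma bddAbove_inner_image (hA : IsBounded A) (u : EuclideanSpace ℝ (Fin n)) :
    BddAbove ((fun x => ⟪x, u⟫) '' A) := by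
  obtain ⟨R, hR⟩ := isBounded_iff_forall_norm_le.1 hA
  refine ⟨R * ‖u‖, forall_mem_image.2 fun x hx => ?_⟩
  exact (real_inner_le_norm x u).trans (by gcongr; exact hR x hx)

lemma le_suppFn (hA : IsBounded A) (hx : x ∈ A) : ⟪x, u⟫ ≤ suppFn A u :=
  le_csSup (bddAbove_inner_image hA u) (mem_image_of_mem _ hx)

lemma suppFn_le (hA : A.Nonempty) (h : ∀ x ∈ A, ⟪x, u⟫ ≤ c) : suppFn A u ≤ c :=
  csSup_le (hA.image _) (forall_mem_image.2 h)

lemma suppFn_le_iff (hA : IsBounded A) (hne : A.Nonempty) :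
    suppFn A u ≤ c ↔ ∀ x ∈ A, ⟪x, u⟫ ≤ c :=
  ⟨fun h _ hx => (le_suppFn hA hx).trans h, suppFn_le hne⟩

lemma exists_inner_eq_suppFn (hA : IsCompact A) (hne : A.Nonempty)
    (u : EuclideanSpace ℝ (Fin n)) : ∃ x ∈ A, ⟪x, u⟫ = suppFn A u :=
  (hA.image (continuous_id.inner continuous_const)).sSup_mem (hne.image _)

lemma suppFn_mono (hB : IsBounded B) (hA : A.Nonempty) (hAB : A ⊆ B) :
    suppFn A u ≤ suppFn B u :=
  suppFn_le hA fun _ hx => le_suppFn hB (hAB hx)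

lemma suppFn_inter_le_min (hA : IsBounded A) (hB : IsBounded B) (hAB : (A ∩ B).Nonempty)
    (u : EuclideanSpace ℝ (Fin n)) : suppFn (A ∩ B) u ≤ min (suppFn A u) (suppFn B u) :=
  le_min (suppFn_mono hA hAB inter_subset_left) (suppFn_mono hB hAB inter_subset_right)

lemma suppFn_smul {r : ℝ} (hr : 0 ≤ r) (A : Set (EuclideanSpace ℝ (Fin n)))
    (u : EuclideanSpace ℝ (Fin n)) : suppFn A (r • u) = r * suppFn A u := by
  simp only [suppFn, real_inner_smul_right]
  rw [← smul_eq_mul, ← Real.sSup_smul_of_nonneg hr, ← image_smul, image_image]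
  rfl

lemma convexOn_suppFn_s10 (hA : IsBounded A) (hne : A.Nonempty) : ConvexOn ℝ univ (suppFn A) := by
  refine ⟨convex_univ, fun u _ v _ a b ha hb _ => suppFn_le hne fun x hx => ?_⟩
  rw [inner_add_right, real_inner_smul_right, real_inner_smul_right, smul_eq_mul, smul_eq_mul]
  gcongr <;> exact le_suppFn hA hx

lemma continuous_suppFn_s10 (hA : IsBounded A) (hne : A.Nonempty) : Continuous (suppFn A) :=
  (convexOn_suppFn_s10 hA hne).locallyLipschitz.continuous

end SupportFunction

section PolarBody

variable {n : ℕ} {A K : Set (EuclideanSpace ℝ (Fin n))} {x u : EuclideanSpace ℝ (Fin n)}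

lemma geometric_hahn_banach_closed_point_inner (hA : IsClosed A) (hAcv : Convex ℝ A)
    (hx : x ∉ A) : ∃ u s, (∀ a ∈ A, ⟪a, u⟫ < s) ∧ s < ⟪x, u⟫ := by
  obtain ⟨f, s, hfA, hfx⟩ := geometric_hahn_banach_closed_point hAcv hA hx
  have hf : ∀ a, ⟪a, (InnerProductSpace.toDual ℝ _).symm f⟫ = f a := fun a => by
    rw [real_inner_comm, InnerProductSpace.toDual_symm_apply]
  exact ⟨_, s, fun a ha => (hf a).symm ▸ hfA a ha, (hf x).symm ▸ hfx⟩

lemma zero_mem_polarBody (K : Set (EuclideanSpace ℝ (Fin n))) : 0 ∈ polarBody K :=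
  fun x _ => by simp

lemma convex_polarBody (K : Set (EuclideanSpace ℝ (Fin n))) : Convex ℝ (polarBody K) := by
  intro y hy z hz a b ha hb hab x hx
  rw [inner_add_right, real_inner_smul_right, real_inner_smul_right]
  exact convex_Iic (1 : ℝ) (hy x hx) (hz x hx) ha hb hab

lemma isClosed_polarBody (K : Set (EuclideanSpace ℝ (Fin n))) : IsClosed (polarBody K) := by
  have : polarBody K = ⋂ x ∈ K, {y | ⟪x, y⟫ ≤ 1} := by ext; simp [polarBody]
  rw [this]
  exact isClosed_biInter fun x _ => isClosed_le (continuous_const.inner continuous_id)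
    continuous_const

lemma polarBody_union (A B : Set (EuclideanSpace ℝ (Fin n))) :
    polarBody (A ∪ B) = polarBody A ∩ polarBody B := by
  ext y
  simp only [polarBody, mem_ofPred_eq, mem_union, mem_inter_iff, or_imp, forall_and]

lemma polarBody_subset_closedBall {ε : ℝ} (hε : 0 < ε) (hK : closedBall 0 ε ⊆ K) :
    polarBody K ⊆ closedBall 0 ε⁻¹ := by
  intro y hy
  rw [mem_closedBall_zero_iff, ← one_div, le_div_iff₀' hε]
  rcases eq_or_ne y 0 with rfl | hy0
  · simp
  have hny : ‖y‖ ≠ 0 := norm_ne_zero_iff.2 hy0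
  have hx : (ε / ‖y‖) • y ∈ K := hK <| by
    rw [mem_closedBall_zero_iff, norm_smul, Real.norm_of_nonneg (by positivity),
      div_mul_cancel₀ _ hny]
  calc ε * ‖y‖ = ⟪(ε / ‖y‖) • y, y⟫ := by
        rw [real_inner_smul_left, real_inner_self_eq_norm_sq]; field_simp
    _ ≤ 1 := hy _ hx

lemma closedBall_subset_polarBody {R : ℝ} (hR : 0 < R) (hK : K ⊆ closedBall 0 R) :
    closedBall 0 R⁻¹ ⊆ polarBody K := fun y hy x hx =>
  calc ⟪x, y⟫ ≤ ‖x‖ * ‖y‖ := real_inner_le_norm x y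
    _ ≤ R * R⁻¹ := by
      gcongr
      · exact mem_closedBall_zero_iff.1 (hK hx)
      · exact mem_closedBall_zero_iff.1 hy
    _ = 1 := mul_inv_cancel₀ hR.ne'

lemma isBounded_polarBody (hK : 0 ∈ interior K) : IsBounded (polarBody K) := by
  obtain ⟨ε, hε, hball⟩ := nhds_basis_closedBall.mem_iff.1 (mem_interior_iff_mem_nhds.1 hK)
  exact isBounded_closedBall.subset (polarBody_subset_closedBall hε hball)

lemma isCompact_polarBody (hK : 0 ∈ interior K) : IsCompact (polarBody K) :=
  isCompact_of_isClosed_isBounded (isClosed_polarBody K) (isBounded_polarBody hK)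

lemma polarBody_polarBody (hK : IsClosed K) (hKcv : Convex ℝ K) (h0 : 0 ∈ K) :
    polarBody (polarBody K) = K := by
  refine Subset.antisymm (fun x hx => ?_) fun x hx y hy => real_inner_comm x y ▸ hy x hx
  by_contra hxK
  obtain ⟨u, s, hK, hs⟩ := geometric_hahn_banach_closed_point_inner hK hKcv hxK
  have hs0 : 0 < s := by simpa using hK 0 h0
  have hu : s⁻¹ • u ∈ polarBody K := fun a ha => by
    rw [real_inner_smul_right, inv_mul_le_one₀ hs0]
    exact (hK a ha).le
  have := hx _ hu
  rw [real_inner_smul_left, real_inner_comm, inv_mul_le_one₀ hs0] at this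
  exact this.not_gt hs

lemma mem_iff_suppFn_polarBody_le_one (hK : IsClosed K) (hKcv : Convex ℝ K)
    (h0 : 0 ∈ interior K) : x ∈ K ↔ suppFn (polarBody K) x ≤ 1 := by
  rw [suppFn_le_iff (isBounded_polarBody h0) ⟨0, zero_mem_polarBody K⟩]
  conv_lhs => rw [← polarBody_polarBody hK hKcv (interior_subset h0)]
  exact forall₂_congr fun y _ => by rw [real_inner_comm]

lemma suppFn_polarBody_pos (hK : IsBounded K) (h0 : 0 ∈ interior K) (hu : u ≠ 0) :
    0 < suppFn (polarBody K) u := by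
  obtain ⟨R, hR, hKR⟩ := hK.subset_closedBall_lt 0 0
  have hnu := norm_pos_iff.2 hu
  have hy : (R⁻¹ / ‖u‖) • u ∈ polarBody K := closedBall_subset_polarBody hR hKR <| by
    rw [mem_closedBall_zero_iff, norm_smul, Real.norm_of_nonneg (by positivity),
      div_mul_cancel₀ _ hnu.ne']
  refine lt_of_lt_of_le ?_ (le_suppFn (isBounded_polarBody h0) hy)
  rw [real_inner_smul_left, real_inner_self_eq_norm_sq]
  positivity

lemma radialFn_eq_inv_suppFn_polarBody (hK : IsCompact K) (hKcv : Convex ℝ K)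
    (h0 : 0 ∈ interior K) (hu : u ≠ 0) : radialFn K u = (suppFn (polarBody K) u)⁻¹ := by
  have hpos := suppFn_polarBody_pos hK.isBounded h0 hu
  have hmem : ∀ {r : ℝ}, 0 ≤ r → (r • u ∈ K ↔ r * suppFn (polarBody K) u ≤ 1) := fun hr => by
    rw [mem_iff_suppFn_polarBody_le_one hK.isClosed hKcv h0, suppFn_smul hr]
  refine IsGreatest.csSup_eq ⟨(hmem (inv_nonneg.2 hpos.le)).2 (inv_mul_cancel₀ hpos.ne').le,
    fun r hr => ?_⟩
  rcases le_total r 0 with hr0 | hr0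
  · exact hr0.trans (inv_nonneg.2 hpos.le)
  · rw [← one_div, le_div_iff₀ hpos]
    exact (hmem hr0).1 hr

end PolarBody

section UnionOfConvexBodies

variable {n : ℕ} {A B K L : Set (EuclideanSpace ℝ (Fin n))}

lemma min_suppFn_le_suppFn_inter (hA : IsCompact A) (hB : IsCompact B) (hAne : A.Nonempty)
    (hBne : B.Nonempty) (hAB : Convex ℝ (A ∪ B)) (u : EuclideanSpace ℝ (Fin n)) :
    min (suppFn A u) (suppFn B u) ≤ suppFn (A ∩ B) u := by
  obtain ⟨a, ha, hau⟩ := exists_inner_eq_suppFn hA hAne u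
  obtain ⟨b, hb, hbu⟩ := exists_inner_eq_suppFn hB hBne u
  obtain ⟨c, ⟨p, q, hp, hq, hpq, rfl⟩, hcA, hcB⟩ :=
    isPreconnected_closed_iff.1 (convex_segment a b).isPreconnected A B hA.isClosed hB.isClosed
      (hAB.segment_subset (subset_union_left ha) (subset_union_right hb))
      ⟨a, left_mem_segment ℝ a b, ha⟩ ⟨b, right_mem_segment ℝ a b, hb⟩
  calc min (suppFn A u) (suppFn B u) = min ⟪a, u⟫ ⟪b, u⟫ := by rw [hau, hbu]
    _ ≤ p * ⟪a, u⟫ + q * ⟪b, u⟫ := Convex.min_le_combo _ _ hp hq hpq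
    _ = ⟪p • a + q • b, u⟫ := by
      rw [inner_add_left, real_inner_smul_left, real_inner_smul_left]
    _ ≤ suppFn (A ∩ B) u := le_suppFn (hA.inter hB).isBounded ⟨hcA, hcB⟩

lemma convex_union_of_min_suppFn_le (hA : IsCompact A) (hB : IsCompact B)
    (hAcv : Convex ℝ A) (hBcv : Convex ℝ B) (hAB : (A ∩ B).Nonempty)
    (h : ∀ w, min (suppFn A w) (suppFn B w) ≤ suppFn (A ∩ B) w) : Convex ℝ (A ∪ B) := by
  intro x hx z hz p q hp hq hpq
  set c := p • x + q • z
  have hle_max : ∀ y ∈ A ∪ B, ∀ w, ⟪y, w⟫ ≤ max (suppFn A w) (suppFn B w) := by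
    rintro y (hy | hy) w
    · exact (le_suppFn hA.isBounded hy).trans (le_max_left _ _)
    · exact (le_suppFn hB.isBounded hy).trans (le_max_right _ _)
  have hc : ∀ w, ⟪c, w⟫ ≤ max (suppFn A w) (suppFn B w) := fun w => by
    rw [inner_add_left, real_inner_smul_left, real_inner_smul_left]
    exact (Convex.combo_le_max _ _ hp hq hpq).trans (max_le (hle_max x hx w) (hle_max z hz w))
  by_contra hcAB
  obtain ⟨u₁, s₁, hA₁, hs₁⟩ :=
    geometric_hahn_banach_closed_point_inner hA.isClosed hAcv fun h => hcAB (Or.inl h)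
  obtain ⟨u₂, s₂, hB₂, hs₂⟩ :=
    geometric_hahn_banach_closed_point_inner hB.isClosed hBcv fun h => hcAB (Or.inr h)
  have hu₁ : suppFn A u₁ < ⟪c, u₁⟫ :=
    (suppFn_le (hAB.mono inter_subset_left) fun a ha => (hA₁ a ha).le).trans_lt hs₁
  have hu₂ : suppFn B u₂ < ⟪c, u₂⟫ :=
    (suppFn_le (hAB.mono inter_subset_right) fun b hb => (hB₂ b hb).le).trans_lt hs₂
  have hconv : Convex ℝ {w | suppFn (A ∩ B) w < ⟪c, w⟫} := by
    simpa [sub_neg] using ((convexOn_suppFn_s10 (hA.inter hB).isBounded hAB).sub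
      ((innerₛₗ ℝ c).concaveOn convex_univ)).convex_lt 0
  have hneg : segment ℝ u₁ u₂ ⊆ {w | suppFn (A ∩ B) w < ⟪c, w⟫} := hconv.segment_subset
    ((suppFn_mono hA.isBounded hAB inter_subset_left).trans_lt hu₁)
    ((suppFn_mono hB.isBounded hAB inter_subset_right).trans_lt hu₂)
  -- on `[u₁, u₂]` the sign of `h_A - h_B` changes, so `h_A = h_B` somewhere
  obtain ⟨w, hw, hABw⟩ := (convex_segment u₁ u₂).isPreconnected.intermediate_value₂
    (left_mem_segment ℝ u₁ u₂) (right_mem_segment ℝ u₁ u₂)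
    (continuous_suppFn_s10 hA.isBounded (hAB.mono inter_subset_left)).continuousOn
    (continuous_suppFn_s10 hB.isBounded (hAB.mono inter_subset_right)).continuousOn
    ((lt_max_iff.1 (hu₁.trans_le (hc u₁))).resolve_left (lt_irrefl _)).le
    ((lt_max_iff.1 (hu₂.trans_le (hc u₂))).resolve_right (lt_irrefl _)).le
  have hcw := hc w
  have hmin := h w
  rw [hABw, max_self] at hcw
  rw [hABw, min_self] at hmin
  exact (hcw.trans hmin).not_gt (hneg hw)

lemma forall_min_suppFn_le_iff_convex_union (hA : IsCompact A) (hB : IsCompact B)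
    (hAcv : Convex ℝ A) (hBcv : Convex ℝ B) (hAB : (A ∩ B).Nonempty) :
    (∀ w, min (suppFn A w) (suppFn B w) ≤ suppFn (A ∩ B) w) ↔ Convex ℝ (A ∪ B) :=
  ⟨convex_union_of_min_suppFn_le hA hB hAcv hBcv hAB, min_suppFn_le_suppFn_inter hA hB
    (hAB.mono inter_subset_left) (hAB.mono inter_subset_right)⟩

lemma polarBody_union_eq_iff_convex (hK : IsClosed K) (hKcv : Convex ℝ K) (hK0 : 0 ∈ K)
    (hL : IsClosed L) (hLcv : Convex ℝ L) (hL0 : 0 ∈ L) :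
    polarBody K ∪ polarBody L = polarBody (K ∩ L) ↔ Convex ℝ (polarBody K ∪ polarBody L) := by
  refine ⟨fun h => h ▸ convex_polarBody _, fun h => ?_⟩
  rw [← polarBody_polarBody ((isClosed_polarBody K).union (isClosed_polarBody L)) h
    (Or.inl (zero_mem_polarBody K)), polarBody_union, polarBody_polarBody hK hKcv hK0,
    polarBody_polarBody hL hLcv hL0]

end UnionOfConvexBodies

lemma le_of_forall_norm_eq_one_le {E : Type*} [NormedAddCommGroup E] [NormedSpace ℝ E]
    {f g : E → ℝ} (hf : ∀ r : ℝ, 0 ≤ r → ∀ w, f (r • w) = r * f w)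
    (hg : ∀ r : ℝ, 0 ≤ r → ∀ w, g (r • w) = r * g w) (h : ∀ u, ‖u‖ = 1 → f u ≤ g u) (w : E) :
    f w ≤ g w := by
  rcases eq_or_ne w 0 with rfl | hw
  · rw [← zero_smul ℝ (0 : E), hf 0 le_rfl, hg 0 le_rfl, zero_mul, zero_mul]
  · rw [← smul_inv_smul₀ (norm_ne_zero_iff.2 hw) w, hf _ (norm_nonneg w), hg _ (norm_nonneg w)]
    exact mul_le_mul_of_nonneg_left (h _ (norm_smul_inv_norm hw)) (norm_nonneg w)

lemma forall_min_suppFn_le_iff_forall_norm_eq_one {n : ℕ} (A B C : Set (EuclideanSpace ℝ (Fin n))) :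
    (∀ w, min (suppFn A w) (suppFn B w) ≤ suppFn C w) ↔
      ∀ u, ‖u‖ = 1 → min (suppFn A u) (suppFn B u) ≤ suppFn C u :=
  ⟨fun h u _ => h u, le_of_forall_norm_eq_one_le
    (fun r hr w => by rw [suppFn_smul hr, suppFn_smul hr, mul_min_of_nonneg _ _ hr])
    (fun r hr w => suppFn_smul hr C w)⟩

lemma abs_sub_le_add_sub_two_mul {a b c : ℝ} (h : c ≤ min a b) : |a - b| ≤ a + b - 2 * c := by
  linarith [max_sub_min_eq_abs' a b, min_add_max a b]

lemma abs_sub_eq_add_sub_two_mul_iff {a b c : ℝ} (h : c ≤ min a b) :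
    |a - b| = a + b - 2 * c ↔ min a b ≤ c := by
  constructor <;> intro <;> linarith [max_sub_min_eq_abs' a b, min_add_max a b]

section ContinuousIntegrand

variable {X : Type*} [TopologicalSpace X] [CompactSpace X] [MeasurableSpace X]
  [OpensMeasurableSpace X] {μ : Measure X} [IsFiniteMeasure μ] {f g : X → ℝ}

lemma Continuous.integrable_of_compactSpace (hf : Continuous f) : Integrable f μ :=
  hf.integrable_of_hasCompactSupport (.of_compactSpace f)

lemma integral_eq_integral_iff_of_continuous_of_le [μ.IsOpenPosMeasure] (hf : Continuous f)
    (hg : Continuous g) (hfg : f ≤ g) : ∫ x, f x ∂μ = ∫ x, g x ∂μ ↔ f = g := by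
  rw [integral_eq_iff_of_ae_le hf.integrable_of_compactSpace hg.integrable_of_compactSpace
    (ae_of_all _ hfg), hf.ae_eq_iff_eq μ hg]

end ContinuousIntegrand

instance (n : ℕ) : IsFiniteMeasure (sphereProb n) := by
  unfold sphereProb; infer_instance

instance (n : ℕ) : (sphereProb n).IsOpenPosMeasure :=
  Measure.isOpenPosMeasure_smul _ (ENNReal.inv_ne_zero.2 (measure_ne_top _ _))

theorem stmt10_general {n : ℕ}
    (K L : Set (EuclideanSpace ℝ (Fin n)))
    (hKcp : IsCompact K) (hKcv : Convex ℝ K) (hKint : 0 ∈ interior K)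
    (hLcp : IsCompact L) (hLcv : Convex ℝ L) (hLint : 0 ∈ interior L) :
    (∫ u : Metric.sphere (0 : EuclideanSpace ℝ (Fin n)) 1,
        |(radialFn K ↑u)⁻¹ - (radialFn L ↑u)⁻¹| ∂(sphereProb n))
      = (∫ u : Metric.sphere (0 : EuclideanSpace ℝ (Fin n)) 1,
          |suppFn (polarBody K) ↑u - suppFn (polarBody L) ↑u| ∂(sphereProb n))
    ∧ (∫ u : Metric.sphere (0 : EuclideanSpace ℝ (Fin n)) 1,
          |suppFn (polarBody K) ↑u - suppFn (polarBody L) ↑u| ∂(sphereProb n))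
      ≤ (∫ u : Metric.sphere (0 : EuclideanSpace ℝ (Fin n)) 1,
          (suppFn (polarBody K) ↑u + suppFn (polarBody L) ↑u
            - 2 * suppFn (polarBody K ∩ polarBody L) ↑u) ∂(sphereProb n))
    ∧ ((∫ u : Metric.sphere (0 : EuclideanSpace ℝ (Fin n)) 1,
          |suppFn (polarBody K) ↑u - suppFn (polarBody L) ↑u| ∂(sphereProb n))
        = (∫ u : Metric.sphere (0 : EuclideanSpace ℝ (Fin n)) 1,
            (suppFn (polarBody K) ↑u + suppFn (polarBody L) ↑u
              - 2 * suppFn (polarBody K ∩ polarBody L) ↑u) ∂(sphereProb n))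
        ↔ polarBody K ∪ polarBody L = polarBody (K ∩ L)) := by
  set A := polarBody K
  set B := polarBody L
  have hA := isCompact_polarBody hKint
  have hB := isCompact_polarBody hLint
  have hAB : (A ∩ B).Nonempty := ⟨0, zero_mem_polarBody K, zero_mem_polarBody L⟩
  have hcA := continuous_suppFn_s10 hA.isBounded (hAB.mono inter_subset_left)
  have hcB := continuous_suppFn_s10 hB.isBounded (hAB.mono inter_subset_right)
  have hcAB := continuous_suppFn_s10 (hA.inter hB).isBounded hAB
  have hinter := suppFn_inter_le_min hA.isBounded hB.isBounded hAB
  have hcont₁ : Continuous fun u : sphere (0 : EuclideanSpace ℝ (Fin n)) 1 =>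
      |suppFn A u - suppFn B u| := by fun_prop
  have hcont₂ : Continuous fun u : sphere (0 : EuclideanSpace ℝ (Fin n)) 1 =>
      suppFn A u + suppFn B u - 2 * suppFn (A ∩ B) u := by fun_prop
  have hle : (fun u : sphere (0 : EuclideanSpace ℝ (Fin n)) 1 => |suppFn A u - suppFn B u|) ≤
      fun u : sphere (0 : EuclideanSpace ℝ (Fin n)) 1 =>
        suppFn A u + suppFn B u - 2 * suppFn (A ∩ B) u :=
    fun u => abs_sub_le_add_sub_two_mul (hinter u)
  refine ⟨integral_congr_ae (ae_of_all _ fun u => ?_),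
    integral_mono hcont₁.integrable_of_compactSpace hcont₂.integrable_of_compactSpace hle, ?_⟩
  · simp only [radialFn_eq_inv_suppFn_polarBody hKcp hKcv hKint (ne_zero_of_mem_unit_sphere u),
      radialFn_eq_inv_suppFn_polarBody hLcp hLcv hLint (ne_zero_of_mem_unit_sphere u), inv_inv,
      A, B]
  rw [integral_eq_integral_iff_of_continuous_of_le hcont₁ hcont₂ hle,
    polarBody_union_eq_iff_convex hKcp.isClosed hKcv (interior_subset hKint) hLcp.isClosed hLcv
      (interior_subset hLint),
    ← forall_min_suppFn_le_iff_convex_union hA hB (convex_polarBody K) (convex_polarBody L) hAB,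
    forall_min_suppFn_le_iff_forall_norm_eq_one, funext_iff]
  simp only [abs_sub_eq_add_sub_two_mul_iff (hinter _), Subtype.forall, mem_sphere_zero_iff_norm,
    A, B]

/-- For convex bodies `K, L ⊆ ℝⁿ` (`n ≥ 2`) containing the origin in their interiors:
`∫ |ρ_K⁻¹ - ρ_L⁻¹| dσ = ∫ |h_{K°} - h_{L°}| dσ ≤ ∫ (h_{K°} + h_{L°} - 2 h_{K°∩L°}) dσ`,
with equality if and only if `K° ∪ L° = (K ∩ L)°`. -/
theorem stmt10 {n : ℕ} (hn : 2 ≤ n)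
    (K L : Set (EuclideanSpace ℝ (Fin n)))
    (hKcp : IsCompact K) (hKcv : Convex ℝ K) (hKint : 0 ∈ interior K)
    (hLcp : IsCompact L) (hLcv : Convex ℝ L) (hLint : 0 ∈ interior L) :
    (∫ u : Metric.sphere (0 : EuclideanSpace ℝ (Fin n)) 1,
        |(radialFn K ↑u)⁻¹ - (radialFn L ↑u)⁻¹| ∂(sphereProb n))
      = (∫ u : Metric.sphere (0 : EuclideanSpace ℝ (Fin n)) 1,
          |suppFn (polarBody K) ↑u - suppFn (polarBody L) ↑u| ∂(sphereProb n))
    ∧ (∫ u : Metric.sphere (0 : EuclideanSpace ℝ (Fin n)) 1,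
          |suppFn (polarBody K) ↑u - suppFn (polarBody L) ↑u| ∂(sphereProb n))
      ≤ (∫ u : Metric.sphere (0 : EuclideanSpace ℝ (Fin n)) 1,
          (suppFn (polarBody K) ↑u + suppFn (polarBody L) ↑u
            - 2 * suppFn (polarBody K ∩ polarBody L) ↑u) ∂(sphereProb n))
    ∧ ((∫ u : Metric.sphere (0 : EuclideanSpace ℝ (Fin n)) 1,
          |suppFn (polarBody K) ↑u - suppFn (polarBody L) ↑u| ∂(sphereProb n))
        = (∫ u : Metric.sphere (0 : EuclideanSpace ℝ (Fin n)) 1,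
            (suppFn (polarBody K) ↑u + suppFn (polarBody L) ↑u
              - 2 * suppFn (polarBody K ∩ polarBody L) ↑u) ∂(sphereProb n))
        ↔ polarBody K ∪ polarBody L = polarBody (K ∩ L)) :=
  stmt10_general K L hKcp hKcv hKint hLcp hLcv hLint
end
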